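/- arXiv:2503.19497 — 3 statements merged into one kernel-verified Lean document; each statement's English description precedes it below -/
import Mathlib

section
/- Let X be a complex space with decomposition X = ⋃_{i∈I} X_i into irreducible branches (a locally finite family of irreducible subvarieties, none contained in another). Then an upper semicontinuous function φ : X → [−∞,+∞) is plurisubharmonic on X if and only if its restriction to each X_i is plurisubharmonic. -/
open Filter Topology Metric Set MeasureTheory
noncomputable section

/-- The open unit disk in `ℂ`. -/
def unitDisk : Set ℂ := Metric.ball 0 1

/-- `elog x` is `Real.log x` viewed in the extended reals, with `elog 0 = ⊥ = -∞`. -/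
def elog (x : ℝ) : EReal := if x = 0 then (⊥ : EReal) else ((Real.log x : ℝ) : EReal)

/-- A function `f : ℂ → EReal` with values in `[-∞, +∞)` is subharmonic on `s` if it is upper
semicontinuous on `s` and, on every closed disk contained in `s`, it is dominated by every
harmonic function (= real part of a holomorphic function) that dominates it on the boundary
circle. -/
def SubharmonicOn (f : ℂ → EReal) (s : Set ℂ) : Prop :=
  UpperSemicontinuousOn f s ∧ (∀ z ∈ s, f z ≠ ⊤) ∧
  ∀ z : ℂ, ∀ r : ℝ, 0 < r → Metric.closedBall z r ⊆ s →
    ∀ F : ℂ → ℂ, ContinuousOn F (Metric.closedBall z r) →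
      DifferentiableOn ℂ F (Metric.ball z r) →
      (∀ w ∈ Metric.sphere z r, f w ≤ ((F w).re : EReal)) →
      ∀ w ∈ Metric.closedBall z r, f w ≤ ((F w).re : EReal)

/-- A function `φ : E → EReal` with values in `[-∞, +∞)` is plurisubharmonic on `s ⊆ E` if it is
upper semicontinuous on `s` and subharmonic along every complex line. -/
def PlurisubharmonicOn {E : Type*} [NormedAddCommGroup E] [NormedSpace ℂ E]
    (φ : E → EReal) (s : Set E) : Prop :=
  UpperSemicontinuousOn φ s ∧ (∀ z ∈ s, φ z ≠ ⊤) ∧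
  ∀ a b : E, SubharmonicOn (fun t : ℂ => φ (a + t • b)) {t : ℂ | a + t • b ∈ s}

/-- `A` is an analytic subset of `Ω ⊆ E`: near every point of `Ω` it is the common zero set of
finitely many holomorphic functions. -/
def IsAnalyticIn {E : Type*} [NormedAddCommGroup E] [NormedSpace ℂ E]
    (Ω A : Set E) : Prop :=
  A ⊆ Ω ∧ ∀ a ∈ Ω, ∃ U ∈ 𝓝 a, ∃ (m : ℕ) (g : Fin m → E → ℂ),
    (∀ i, DifferentiableOn ℂ (g i) U) ∧ A ∩ U = {z ∈ U | ∀ i, g i z = 0}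

/-- A chart of a complex space: a homeomorphism from an open set `dom ⊆ X` onto an analytic
subset `A` of an open set `Ω ⊆ ℂⁿ`. -/
structure CSChart (X : Type*) [TopologicalSpace X] (n : ℕ) where
  dom : Set X
  dom_open : IsOpen dom
  Ω : Set (Fin n → ℂ)
  Ω_open : IsOpen Ω
  A : Set (Fin n → ℂ)
  A_analytic : IsAnalyticIn Ω A
  toFun : X → Fin n → ℂ
  invFun : (Fin n → ℂ) → X
  continuousOn_toFun : ContinuousOn toFun dom
  continuousOn_invFun : ContinuousOn invFun A
  image_eq : toFun '' dom = A
  left_inv : ∀ x ∈ dom, invFun (toFun x) = x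
  right_inv : ∀ y ∈ A, toFun (invFun y) = y
  maps_inv : ∀ y ∈ A, invFun y ∈ dom

/-- A complex space: a topological space with an atlas of charts onto analytic sets whose
transition maps are holomorphic (i.e. locally extend to holomorphic maps of the ambient
complex Euclidean spaces). -/
structure ComplexSpace (X : Type*) [TopologicalSpace X] where
  atlas : Set (Σ n : ℕ, CSChart X n)
  cover : ∀ x : X, ∃ c ∈ atlas, x ∈ c.2.dom
  compat : ∀ c ∈ atlas, ∀ c' ∈ atlas, ∀ x ∈ c.2.dom ∩ c'.2.dom,
    ∃ U : Set (Fin c.1 → ℂ), IsOpen U ∧ c.2.toFun x ∈ U ∧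
      ∃ F : (Fin c.1 → ℂ) → (Fin c'.1 → ℂ),
        DifferentiableOn ℂ F U ∧
        ∀ y ∈ c.2.dom ∩ c'.2.dom, c.2.toFun y ∈ U → F (c.2.toFun y) = c'.2.toFun y

variable {X : Type*} [TopologicalSpace X]

/-- A map `f : W → X` from (a subset `s` of) a complex normed space `W` to a complex space `X`
is holomorphic on `s` if it is continuous on `s` and, composed with charts, is holomorphic. -/
def HolomorphicOnSpace {W : Type*} [NormedAddCommGroup W] [NormedSpace ℂ W]
    (S : ComplexSpace X) (f : W → X) (s : Set W) : Prop :=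
  ContinuousOn f s ∧ ∀ z ∈ s, ∃ c ∈ S.atlas, f z ∈ c.2.dom ∧
    ∃ U ∈ 𝓝 z, DifferentiableOn ℂ (fun w => c.2.toFun (f w)) (U ∩ s)

/-- A plurisubharmonic function on a complex space `X` (with values in `[-∞,+∞)`):
upper semicontinuous, and subharmonic along every holomorphic disk. -/
def PSHSpace (S : ComplexSpace X) (φ : X → EReal) : Prop :=
  (∀ x, φ x ≠ ⊤) ∧ UpperSemicontinuous φ ∧
  ∀ f : ℂ → X, HolomorphicOnSpace S f unitDisk →
    SubharmonicOn (fun t => φ (f t)) unitDisk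

/-- Restriction of the notion of plurisubharmonicity to a subset `T` of a complex space. -/
def PSHOnSubset (S : ComplexSpace X) (φ : X → EReal) (T : Set X) : Prop :=
  (∀ x ∈ T, φ x ≠ ⊤) ∧ UpperSemicontinuousOn φ T ∧
  ∀ f : ℂ → X, (∀ t ∈ unitDisk, f t ∈ T) → HolomorphicOnSpace S f unitDisk →
    SubharmonicOn (fun t => φ (f t)) unitDisk

/-- The Lelong number of `φ` at `z` computed in the chart `c`. -/
def lelongChart {n : ℕ} (c : CSChart X n) (φ : X → EReal) (z : X) : EReal :=
  Filter.liminf (fun w => φ w / ((Real.log ‖c.toFun w - c.toFun z‖ : ℝ) : EReal))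
    (𝓝[c.dom \ {z}] z)

/-- The Lelong number at `z` of the restriction of `φ` to `T`, computed in the chart `c`. -/
def lelongChartOn {n : ℕ} (c : CSChart X n) (φ : X → EReal) (T : Set X) (z : X) : EReal :=
  Filter.liminf (fun w => φ w / ((Real.log ‖c.toFun w - c.toFun z‖ : ℝ) : EReal))
    (𝓝[(T ∩ c.dom) \ {z}] z)

/-- `T` is an analytic subset of the open set `V ⊆ X` (`X` a complex space). -/
def IsAnalyticInSpace (S : ComplexSpace X) (V T : Set X) : Prop :=
  T ⊆ V ∧ ∀ x ∈ V, ∃ c ∈ S.atlas, x ∈ c.2.dom ∧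
    ∃ Ω' : Set (Fin c.1 → ℂ), IsOpen Ω' ∧ c.2.toFun x ∈ Ω' ∧
      IsAnalyticIn Ω' (c.2.toFun '' (T ∩ c.2.dom) ∩ Ω')

/-- `T` is a subvariety of the complex space `X`. -/
def IsSubvariety (S : ComplexSpace X) (T : Set X) : Prop :=
  IsAnalyticInSpace S Set.univ T

/-- `T` is irreducible as an analytic subset of the open set `V ⊆ X`: it is not the union of two
proper analytic subsets. -/
def IrreducibleIn (S : ComplexSpace X) (V T : Set X) : Prop :=
  IsAnalyticInSpace S V T ∧
  ¬ ∃ T₁ T₂ : Set X, IsAnalyticInSpace S V T₁ ∧ IsAnalyticInSpace S V T₂ ∧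
      T = T₁ ∪ T₂ ∧ T₁ ≠ T ∧ T₂ ≠ T

/-- `T` is locally irreducible at `z`: there is a basis of neighbourhoods of `z` in which `T` is
irreducible. -/
def IrreducibleAt (S : ComplexSpace X) (T : Set X) (z : X) : Prop :=
  ∀ U ∈ 𝓝 z, ∃ V : Set X, IsOpen V ∧ z ∈ V ∧ V ⊆ U ∧ IrreducibleIn S V (T ∩ V)

/-- The Lelong number at `0` of a function on the unit disk. -/
def lelongDisk (ψ : ℂ → EReal) : EReal :=
  Filter.liminf (fun t => ψ t / ((Real.log ‖t‖ : ℝ) : EReal)) (𝓝[unitDisk \ {0}] 0)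

/-- The multiplicity `mult₀,z f` of a holomorphic disk `f : Δ → X` with `f 0 = z`,
computed in the chart `c` at `z`. -/
def multDisk {n : ℕ} (c : CSChart X n) (f : ℂ → X) (z : X) : EReal :=
  Filter.liminf
    (fun t => ((Real.log ‖c.toFun (f t) - c.toFun z‖ : ℝ) : EReal) /
      ((Real.log ‖t‖ : ℝ) : EReal)) (𝓝[unitDisk \ {0}] 0)

/-- A curve germ at `z`: a one-dimensional locally irreducible complex subspace through `z`,
given (via the local parametrization theorem) as the injective image of a holomorphic disk. -/
def IsCurveGermAt (S : ComplexSpace X) (γ : Set X) (z : X) : Prop :=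
  z ∈ γ ∧ IrreducibleAt S γ z ∧
  ∃ f : ℂ → X, HolomorphicOnSpace S f unitDisk ∧ f 0 = z ∧ Set.InjOn f unitDisk ∧
    f '' unitDisk = γ

/-- `T` is an irreducible subvariety of the complex space `X`: an analytic subset which is not
the union of two proper analytic subsets. -/
def IrreducibleSubvariety {X : Type*} [TopologicalSpace X] (S : ComplexSpace X)
    (T : Set X) : Prop :=
  IsSubvariety S T ∧
  ¬ ∃ T₁ T₂ : Set X, IsSubvariety S T₁ ∧ IsSubvariety S T₂ ∧
      T = T₁ ∪ T₂ ∧ T₁ ≠ T ∧ T₂ ≠ T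

section AuxStmt5

/-- If finitely many closed sets cover a nonempty open set, one of them has nonempty interior. -/
lemma aux_finite_cover {α : Type*} [TopologicalSpace α] {ι : Type*} (s : Finset ι)
    (C : ι → Set α) (hC : ∀ i ∈ s, IsClosed (C i)) :
    ∀ O : Set α, IsOpen O → O.Nonempty → O ⊆ ⋃ i ∈ s, C i →
      ∃ i ∈ s, (interior (C i)).Nonempty := by
  classical
  induction s using Finset.induction_on with
  | empty =>
    intro O _ hOne hcov
    obtain ⟨x, hx⟩ := hOne
    simpa using hcov hx
  | @insert a s ha ih =>
    intro O hO hOne hcov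
    by_cases hint : (interior (C a)).Nonempty
    · exact ⟨a, Finset.mem_insert_self _ _, hint⟩
    · have hCa : IsClosed (C a) := hC a (Finset.mem_insert_self _ _)
      have hO' : IsOpen (O ∩ (C a)ᶜ) := hO.inter hCa.isOpen_compl
      have hne : (O ∩ (C a)ᶜ).Nonempty := by
        rcases Set.eq_empty_or_nonempty (O ∩ (C a)ᶜ) with h | h
        · exfalso
          have hsub : O ⊆ C a := by
            intro x hx
            by_contra hxa
            exact (h ▸ (Set.mem_inter hx hxa) : x ∈ (∅ : Set α))
          obtain ⟨x, hx⟩ := hOne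
          exact hint ⟨x, interior_maximal hsub hO hx⟩
        · exact h
      have hcov' : O ∩ (C a)ᶜ ⊆ ⋃ i ∈ s, C i := by
        intro x hx
        have hx' := hcov hx.1
        simp only [Set.mem_iUnion, exists_prop, Finset.mem_insert] at hx' ⊢
        obtain ⟨i, hi, hxi⟩ := hx'
        rcases hi with rfl | hi
        · exact absurd hxi hx.2
        · exact ⟨i, hi, hxi⟩
      obtain ⟨i, hi, hni⟩ := ih (fun i h => hC i (Finset.mem_insert_of_mem h))
        (O ∩ (C a)ᶜ) hO' hne hcov'
      exact ⟨i, Finset.mem_insert_of_mem hi, hni⟩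

variable {X : Type*} [TopologicalSpace X]

lemma aux_unitDisk_open : IsOpen unitDisk := Metric.isOpen_ball

/-- Key local lemma: near any point of the disk, the preimage of a subvariety under a
holomorphic map is the common zero set of finitely many holomorphic functions. -/
lemma aux_key_local (S : ComplexSpace X) {T : Set X} (hT : IsSubvariety S T)
    {f : ℂ → X} (hf : HolomorphicOnSpace S f unitDisk) {t : ℂ} (ht : t ∈ unitDisk) :
    ∃ U : Set ℂ, IsOpen U ∧ t ∈ U ∧ U ⊆ unitDisk ∧
      ∃ (m : ℕ) (h : Fin m → ℂ → ℂ), (∀ j, DifferentiableOn ℂ (h j) U) ∧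
        ∀ z ∈ U, (f z ∈ T ↔ ∀ j, h j z = 0) := by
  obtain ⟨hfc, hfh⟩ := hf
  obtain ⟨c, hc, hxc, U₀, hU₀, hdiff₀⟩ := hfh t ht
  obtain ⟨hTsub, hTan⟩ := hT
  obtain ⟨c', hc', hxc', Ω', hΩ'o, hxΩ', hA⟩ := hTan (f t) (Set.mem_univ _)
  obtain ⟨U'', hU''n, m, g, hgd, hgz⟩ := hA.2 (c'.2.toFun (f t)) hxΩ'
  obtain ⟨V, hVo, hxV, F, hFd, hFeq⟩ := S.compat c hc c' hc' (f t) ⟨hxc, hxc'⟩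
  set O1 : Set ℂ := unitDisk ∩ f ⁻¹' (c.2.dom ∩ c'.2.dom) with hO1def
  have hO1 : IsOpen O1 :=
    hfc.isOpen_inter_preimage aux_unitDisk_open (c.2.dom_open.inter c'.2.dom_open)
  have hq : ContinuousOn (fun z => c.2.toFun (f z)) O1 :=
    c.2.continuousOn_toFun.comp (hfc.mono Set.inter_subset_left)
      (fun z hz => hz.2.1)
  set O2 : Set ℂ := O1 ∩ (fun z => c.2.toFun (f z)) ⁻¹' V with hO2def
  have hO2 : IsOpen O2 := hq.isOpen_inter_preimage hO1 hVo
  have hr : ContinuousOn (fun z => F (c.2.toFun (f z))) O2 :=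
    hFd.continuousOn.comp (hq.mono Set.inter_subset_left) (fun z hz => hz.2)
  set O3 : Set ℂ := O2 ∩ (fun z => F (c.2.toFun (f z))) ⁻¹' (Ω' ∩ interior U'') with hO3def
  have hO3 : IsOpen O3 := hr.isOpen_inter_preimage hO2 (hΩ'o.inter isOpen_interior)
  refine ⟨interior U₀ ∩ O3, isOpen_interior.inter hO3, ?_, ?_, m,
    fun j => fun z => g j (F (c.2.toFun (f z))), ?_, ?_⟩
  · have hFt : F (c.2.toFun (f t)) = c'.2.toFun (f t) := hFeq (f t) ⟨hxc, hxc'⟩ hxV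
    refine ⟨mem_interior_iff_mem_nhds.2 hU₀, ⟨⟨ht, hxc, hxc'⟩, hxV⟩, ?_⟩
    show F (c.2.toFun (f t)) ∈ Ω' ∩ interior U''
    rw [hFt]
    exact ⟨hxΩ', mem_interior_iff_mem_nhds.2 hU''n⟩
  · exact fun z hz => hz.2.1.1.1
  · intro j
    have hsub : interior U₀ ∩ O3 ⊆ U₀ ∩ unitDisk :=
      fun z hz => ⟨interior_subset hz.1, hz.2.1.1.1⟩
    have step1 : DifferentiableOn ℂ (fun z => c.2.toFun (f z)) (interior U₀ ∩ O3) :=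
      hdiff₀.mono hsub
    have step2 : DifferentiableOn ℂ (fun z => F (c.2.toFun (f z))) (interior U₀ ∩ O3) :=
      hFd.comp step1 (fun z hz => hz.2.1.2)
    exact ((hgd j).mono interior_subset).comp step2 (fun z hz => hz.2.2.2)
  · intro z hz
    have hzdom : f z ∈ c.2.dom ∩ c'.2.dom := hz.2.1.1.2
    have hzV : c.2.toFun (f z) ∈ V := hz.2.1.2
    have hFz : F (c.2.toFun (f z)) = c'.2.toFun (f z) := hFeq (f z) hzdom hzV
    have hyΩ' : c'.2.toFun (f z) ∈ Ω' := hFz ▸ hz.2.2.1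
    have hyU'' : c'.2.toFun (f z) ∈ U'' := interior_subset (hFz ▸ hz.2.2.2)
    constructor
    · intro hfzT j
      have hyA : c'.2.toFun (f z) ∈ c'.2.toFun '' (T ∩ c'.2.dom) ∩ Ω' :=
        ⟨⟨f z, ⟨hfzT, hzdom.2⟩, rfl⟩, hyΩ'⟩
      have hmem : c'.2.toFun (f z) ∈ {w ∈ U'' | ∀ i, g i w = 0} := hgz ▸ ⟨hyA, hyU''⟩
      simpa only [hFz] using hmem.2 j
    · intro hgj
      have hmem : c'.2.toFun (f z) ∈ (c'.2.toFun '' (T ∩ c'.2.dom) ∩ Ω') ∩ U'' := by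
        rw [hgz]
        exact ⟨hyU'', fun i => by simpa only [hFz] using hgj i⟩
      obtain ⟨⟨x', hx'T, hx'eq⟩, _⟩ := hmem.1
      have hxx : x' = f z := by
        have h1 := c'.2.left_inv x' hx'T.2
        have h2 := c'.2.left_inv (f z) hzdom.2
        rw [hx'eq] at h1
        rw [h1] at h2
        exact h2
      exact hxx ▸ hx'T.1

/-- The preimage of a subvariety is relatively closed in the disk. -/
lemma aux_closed (S : ComplexSpace X) {T : Set X} (hT : IsSubvariety S T)
    {f : ℂ → X} (hf : HolomorphicOnSpace S f unitDisk) {t : ℂ} (ht : t ∈ unitDisk)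
    (hcl : t ∈ closure {z | z ∈ unitDisk ∧ f z ∈ T}) : f t ∈ T := by
  obtain ⟨U, hUo, htU, hUΔ, m, h, hhd, hhiff⟩ := aux_key_local S hT hf ht
  by_contra hfT
  obtain ⟨j, hj⟩ : ∃ j, h j t ≠ 0 := by
    by_contra hall
    push_neg at hall
    exact hfT ((hhiff t htU).2 hall)
  have hcont : ContinuousAt (h j) t :=
    (hhd j).continuousOn.continuousAt (hUo.mem_nhds htU)
  have hev : ∀ᶠ z in 𝓝 t, h j z ≠ 0 := hcont.eventually_ne hj
  obtain ⟨N₁, hN₁n, hN₁o, htN₁⟩ := _root_.mem_nhds_iff.mp (hev.and (hUo.mem_nhds htU))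
  rw [_root_.mem_closure_iff] at hcl
  obtain ⟨z, hzN, hzΔ, hzT⟩ := hcl N₁ hN₁o htN₁
  exact (hN₁n hzN).1 ((hhiff z (hN₁n hzN).2).1 hzT j)

/-- If the preimage of a subvariety has nonempty interior in the disk, it is the whole disk. -/
lemma aux_spread (S : ComplexSpace X) {T : Set X} (hT : IsSubvariety S T)
    {f : ℂ → X} (hf : HolomorphicOnSpace S f unitDisk)
    {W : Set ℂ} (hWo : IsOpen W) (hWne : W.Nonempty) (hWΔ : W ⊆ unitDisk)
    (hWT : ∀ z ∈ W, f z ∈ T) : ∀ z ∈ unitDisk, f z ∈ T := by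
  set C : Set ℂ := {z | z ∈ unitDisk ∧ f z ∈ T} with hCdef
  set E : Set ℂ := interior C with hEdef
  have hWE : W ⊆ E := interior_maximal (fun z hz => ⟨hWΔ hz, hWT z hz⟩) hWo
  have hEne : E.Nonempty := hWne.mono hWE
  have hEo : IsOpen E := isOpen_interior
  have hEC : E ⊆ C := interior_subset
  have hkey : ∀ t ∈ unitDisk, t ∈ closure E → t ∈ E := by
    intro t ht hcl
    obtain ⟨U, hUo, htU, hUΔ, m, h, hhd, hhiff⟩ := aux_key_local S hT hf ht
    obtain ⟨r, hr0, hrU⟩ := Metric.isOpen_iff.mp hUo t htU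
    obtain ⟨z₀, hz₀b, hz₀E⟩ : ∃ z₀, z₀ ∈ Metric.ball t r ∧ z₀ ∈ E := by
      rw [_root_.mem_closure_iff] at hcl
      obtain ⟨z₀, h1, h2⟩ := hcl _ Metric.isOpen_ball (Metric.mem_ball_self hr0)
      exact ⟨z₀, h1, h2⟩
    have hzero : ∀ j, Set.EqOn (h j) 0 (Metric.ball t r) := by
      intro j
      have han : AnalyticOnNhd ℂ (h j) (Metric.ball t r) :=
        ((hhd j).mono hrU).analyticOnNhd Metric.isOpen_ball
      have hevz : h j =ᶠ[𝓝 z₀] 0 := by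
        refine Filter.eventuallyEq_of_mem
          ((hEo.inter Metric.isOpen_ball).mem_nhds ⟨hz₀E, hz₀b⟩) (fun z hz => ?_)
        have hzC : z ∈ C := hEC hz.1
        simpa using (hhiff z (hrU hz.2)).1 hzC.2 j
      exact han.eqOn_zero_of_preconnected_of_eventuallyEq_zero
        (convex_ball t r).isPreconnected hz₀b hevz
    have hballC : Metric.ball t r ⊆ C := by
      intro z hz
      exact ⟨hUΔ (hrU hz), (hhiff z (hrU hz)).2 (fun j => by simpa using hzero j hz)⟩
    exact interior_maximal hballC Metric.isOpen_ball (Metric.mem_ball_self hr0)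
  -- connectedness argument
  have hpre : IsPreconnected unitDisk := (convex_ball (0 : ℂ) 1).isPreconnected
  intro z hz
  by_cases hzc : z ∈ closure E
  · exact (hEC (hkey z hz hzc)).2
  · exfalso
    have hsub : unitDisk ⊆ E ∪ (closure E)ᶜ := by
      intro w hw
      by_cases hwc : w ∈ closure E
      · exact Or.inl (hkey w hw hwc)
      · exact Or.inr hwc
    obtain ⟨e, he⟩ := hEne
    have h1 : (unitDisk ∩ E).Nonempty := ⟨e, (hEC he).1, he⟩
    have h2 : (unitDisk ∩ (closure E)ᶜ).Nonempty := ⟨z, hz, hzc⟩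
    obtain ⟨w, _, hwE, hwc⟩ := hpre E (closure E)ᶜ hEo isClosed_closure.isOpen_compl
      hsub h1 h2
    exact hwc (subset_closure hwE)

end AuxStmt5

/-- Let `X = ⋃ᵢ Xᵢ` be the decomposition of a complex space into its
irreducible branches (a locally finite family of irreducible subvarieties, none contained in
another).  An upper semicontinuous `φ : X → [-∞,+∞)` is plurisubharmonic on `X` iff its
restriction to each branch `Xᵢ` is plurisubharmonic. -/
theorem stmt_5 {X : Type*} [TopologicalSpace X] (S : ComplexSpace X)
    {I : Type*} (Xi : I → Set X)
    (hirr : ∀ i, IrreducibleSubvariety S (Xi i))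
    (hlf : LocallyFinite Xi)
    (hnc : ∀ i j, i ≠ j → ¬ Xi i ⊆ Xi j)
    (hcover : (⋃ i, Xi i) = Set.univ)
    (φ : X → EReal) (husc : UpperSemicontinuous φ) (htop : ∀ x, φ x ≠ ⊤) :
    PSHSpace S φ ↔ ∀ i, PSHOnSubset S φ (Xi i) := by
  constructor
  · intro hpsh i
    exact ⟨fun x _ => htop x, husc.upperSemicontinuousOn _,
      fun f _ hf => hpsh.2.2 f hf⟩
  · intro hi
    refine ⟨htop, husc, ?_⟩
    intro f hf
    -- find a branch containing the image of f
    have h0 : (0 : ℂ) ∈ unitDisk := Metric.mem_ball_self one_pos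
    obtain ⟨V, hVn, hVfin⟩ := hlf (f 0)
    set N : Set ℂ := unitDisk ∩ f ⁻¹' interior V with hNdef
    have hNo : IsOpen N :=
      hf.1.isOpen_inter_preimage aux_unitDisk_open isOpen_interior
    have h0N : (0 : ℂ) ∈ N := ⟨h0, mem_interior_iff_mem_nhds.2 hVn⟩
    set C : I → Set ℂ := fun i => closure {z | z ∈ unitDisk ∧ f z ∈ Xi i} with hCdef
    have hcov : N ⊆ ⋃ i ∈ hVfin.toFinset, C i := by
      intro z hz
      have hzuniv : f z ∈ ⋃ i, Xi i := hcover ▸ Set.mem_univ (f z)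
      obtain ⟨i, hiz⟩ := Set.mem_iUnion.mp hzuniv
      have hiV : i ∈ hVfin.toFinset := by
        rw [Set.Finite.mem_toFinset]
        exact ⟨f z, hiz, interior_subset hz.2⟩
      exact Set.mem_biUnion hiV (subset_closure ⟨hz.1, hiz⟩)
    obtain ⟨i, _, hWne⟩ := aux_finite_cover hVfin.toFinset C
      (fun i _ => isClosed_closure) N hNo ⟨0, h0N⟩ hcov
    -- interior of C i is an open subset of the disk on which f lands in Xi i
    have hCsub : C i ⊆ closure unitDisk :=
      closure_mono (fun z hz => hz.1)
    have hWΔ : interior (C i) ⊆ unitDisk := by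
      have h1 : interior (C i) ⊆ interior (closure unitDisk) := interior_mono hCsub
      have h2 : closure unitDisk = Metric.closedBall (0 : ℂ) 1 :=
        closure_ball 0 one_ne_zero
      have h3 : interior (Metric.closedBall (0 : ℂ) 1) = Metric.ball 0 1 :=
        interior_closedBall 0 one_ne_zero
      intro z hz
      have := h1 hz
      rw [h2, h3] at this
      exact this
    have hWT : ∀ z ∈ interior (C i), f z ∈ Xi i := fun z hz =>
      aux_closed S (hirr i).1 hf (hWΔ hz) (interior_subset hz)
    have hall : ∀ z ∈ unitDisk, f z ∈ Xi i :=
      aux_spread S (hirr i).1 hf isOpen_interior hWne hWΔ hWT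
    exact (hi i).2.2 f hall hf
end
end

section
/- Let A and B be locally closed subsets of ℂᵏ and ℂᵐ, z ∈ A a limit point of A, and suppose there exist constants C₁, C₂ > 0 and a bijection h : A → B with h(z) =: z' such that C₁‖w−z‖ ≤ ‖h(w)−z'‖ ≤ C₂‖w−z‖ for all w ∈ A. Then for any function φ : A → [−∞,+∞), liminf_{w→z} φ(w)/log‖w−z‖ = liminf_{v→z'} φ(h⁻¹(v))/log‖v−z'‖. -/
open Filter Topology Metric Set
noncomputable section

/-- Liminf along a pushforward filter is the liminf of the composition. -/
lemma liminf_map_aux {α β γ : Type*} [CompleteLattice γ] (u : β → γ) (g : α → β)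
    (F : Filter α) :
    Filter.liminf u (Filter.map g F) = Filter.liminf (u ∘ g) F := by
  rw [Filter.liminf, Filter.liminf, Filter.map_map]

/-- If `L → -∞` and `M` stays within a bounded distance of `L`, then the liminf of
`φ / L` is at most the liminf of `φ / M` (in `EReal`). -/
lemma slope_liminf_le_aux {α : Type*} {F : Filter α} {L M : α → ℝ} {D : ℝ}
    (hL : Tendsto L F atBot) (hDev : ∀ᶠ w in F, |M w - L w| ≤ D) (φ : α → EReal) :
    F.liminf (fun w => φ w / ((L w : ℝ) : EReal)) ≤
      F.liminf (fun w => φ w / ((M w : ℝ) : EReal)) := by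
  by_contra hlt
  push_neg at hlt
  obtain ⟨c, hc1, hc2⟩ := EReal.exists_between_coe_real hlt
  obtain ⟨c', hc'1, hc'2⟩ := EReal.exists_between_coe_real hc1
  rw [EReal.coe_lt_coe_iff] at hc'2
  set D₀ : ℝ := max D 0 with hD₀def
  have hD : ∀ᶠ w in F, |M w - L w| ≤ D₀ := hDev.mono fun w hw => hw.trans (le_max_left _ _)
  have hD0 : 0 ≤ D₀ := le_max_right _ _
  set ε : ℝ := min (1/2) ((c - c') / (2 * (|c| + 1))) with hε
  have hεpos : 0 < ε := lt_min (by norm_num) (div_pos (by linarith) (by positivity))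
  have hεhalf : ε ≤ 1/2 := min_le_left _ _
  have hεc : 2 * ε * (|c| + 1) ≤ c - c' := by
    have h1 : ε ≤ (c - c') / (2 * (|c| + 1)) := min_le_right _ _
    have h2 : (0:ℝ) < 2 * (|c| + 1) := by positivity
    calc 2 * ε * (|c| + 1) ≤ 2 * ((c - c') / (2 * (|c| + 1))) * (|c| + 1) := by
          nlinarith [abs_nonneg c]
      _ = c - c' := by field_simp
  have hev : ∀ᶠ w in F, (c' : EReal) ≤ φ w / ((M w : ℝ) : EReal) := by
    have hLsmall : ∀ᶠ w in F, L w ≤ -(D₀ / ε) - 1 := hL.eventually_le_atBot _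
    have hφ : ∀ᶠ w in F, (c : EReal) < φ w / ((L w : ℝ) : EReal) :=
      Filter.eventually_lt_of_lt_liminf hc2
    filter_upwards [hLsmall, hD, hφ] with w hw1 hw2 hw3
    have hDε : 0 ≤ D₀ / ε := div_nonneg hD0 hεpos.le
    have hLneg : L w < 0 := by linarith
    have hDL : D₀ ≤ ε * (-(L w)) := by
      have h1 : D₀ / ε + 1 ≤ -(L w) := by linarith
      have h3 : ε * (D₀ / ε + 1) ≤ ε * (-(L w)) := mul_le_mul_of_nonneg_left h1 hεpos.le
      have h5 : ε * (D₀ / ε + 1) = D₀ + ε := by field_simp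
      linarith
    set s : ℝ := M w / L w with hs
    have habs := abs_le.mp (hw2.trans hDL)
    have hs1 : 1 - ε ≤ s := by
      rw [hs, le_div_iff_of_neg hLneg]
      nlinarith [habs.1, habs.2]
    have hs2 : s ≤ 1 + ε := by
      rw [hs, div_le_iff_of_neg hLneg]
      nlinarith [habs.1, habs.2]
    have hspos : 0 < s := by linarith
    have hLs : L w * s = M w := by
      rw [hs, mul_comm, div_mul_cancel₀ _ hLneg.ne]
    have key : φ w / ((M w : ℝ) : EReal) = (φ w / ((L w : ℝ) : EReal)) / ((s : ℝ) : EReal) := by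
      rw [EReal.div_div, ← EReal.coe_mul, hLs]
    rw [key]
    have step1 : ((c : ℝ) : EReal) / ((s : ℝ) : EReal) ≤
        (φ w / ((L w : ℝ) : EReal)) / ((s : ℝ) : EReal) :=
      EReal.div_le_div_right_of_nonneg (by exact_mod_cast hspos.le) hw3.le
    have step2 : (c' : EReal) ≤ ((c : ℝ) : EReal) / ((s : ℝ) : EReal) := by
      rw [← EReal.coe_div, EReal.coe_le_coe_iff]
      have hmid : c - 2 * ε * (|c| + 1) ≤ c / s := by
        rw [le_div_iff₀ hspos]
        rcases abs_cases c with ⟨h1, h2⟩ | ⟨h1, h2⟩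
        · rw [h1]
          have h3 : c * s ≤ c * (1 + ε) := mul_le_mul_of_nonneg_left hs2 h2
          have h4 : 2 * ε * (c + 1) * (1 - ε) ≤ 2 * ε * (c + 1) * s :=
            mul_le_mul_of_nonneg_left hs1 (by positivity)
          nlinarith
        · rw [h1]
          have h3 : c * s ≤ c * (1 - ε) := by nlinarith
          have h4 : 2 * ε * (-c + 1) * (1 - ε) ≤ 2 * ε * (-c + 1) * s :=
            mul_le_mul_of_nonneg_left hs1 (by nlinarith)
          have h5 : ε * (ε * (1 - c)) ≤ (1/2) * (ε * (1 - c)) :=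
            mul_le_mul_of_nonneg_right hεhalf
              (mul_nonneg hεpos.le (by linarith : (0:ℝ) ≤ 1 - c))
          nlinarith
      linarith
    exact step2.trans step1
  have : (c' : EReal) ≤ F.liminf (fun w => φ w / ((M w : ℝ) : EReal)) :=
    Filter.le_liminf_of_le (by isBoundedDefault) hev
  exact absurd (lt_of_le_of_lt this hc'1) (lt_irrefl _)

/-- A bijection between `A` and `B` whose distances to the base points are comparable
pushes the punctured neighborhood filter of `z` within `A` to that of `z' = h z` within `B`. -/
lemma map_punctured_filter_aux {E F' : Type*} [NormedAddCommGroup E] [NormedAddCommGroup F']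
    (A : Set E) (B : Set F') (z : E)
    (h : E → F') (h' : F' → E)
    (z' : F')
    (hbij : Set.BijOn h A B) (hinv : Set.InvOn h' h A B)
    (hz' : h z = z')
    (C₁ C₂ : ℝ) (hC₁ : 0 < C₁) (hC₂ : 0 < C₂)
    (hcomp : ∀ w ∈ A, C₁ * ‖w - z‖ ≤ ‖h w - z'‖ ∧ ‖h w - z'‖ ≤ C₂ * ‖w - z‖) :
    Filter.map h (𝓝[A \ {z}] z) = 𝓝[B \ {z'}] z' := by
  set F := 𝓝[A \ {z}] z with hF
  set G := 𝓝[B \ {z'}] z' with hG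
  have hmemA : ∀ᶠ w in F, w ∈ A \ {z} := self_mem_nhdsWithin
  have hmemB : ∀ᶠ v in G, v ∈ B \ {z'} := self_mem_nhdsWithin
  have hinv' : ∀ v ∈ B, h' v ∈ A ∧ h (h' v) = v := by
    intro v hv
    obtain ⟨w, hw, rfl⟩ := hbij.surjOn hv
    rw [hinv.1 hw]
    exact ⟨hw, rfl⟩
  have hnorm0 : Tendsto (fun w => ‖w - z‖) F (𝓝 0) := by
    have h1 : Tendsto (fun w => ‖w - z‖) (𝓝 z) (𝓝 ‖z - z‖) :=
      (Continuous.norm (continuous_id.sub continuous_const)).tendsto z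
    rw [sub_self, norm_zero] at h1
    exact h1.mono_left nhdsWithin_le_nhds
  have hnorm0' : Tendsto (fun v => ‖v - z'‖) G (𝓝 0) := by
    have h1 : Tendsto (fun v => ‖v - z'‖) (𝓝 z') (𝓝 ‖z' - z'‖) :=
      (Continuous.norm (continuous_id.sub continuous_const)).tendsto z'
    rw [sub_self, norm_zero] at h1
    exact h1.mono_left nhdsWithin_le_nhds
  have hth : Tendsto h F G := by
    rw [hG, tendsto_nhdsWithin_iff]
    constructor
    · rw [tendsto_iff_norm_sub_tendsto_zero]
      apply squeeze_zero' (hmemA.mono fun w _ => norm_nonneg _)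
        (hmemA.mono fun w hw => (hcomp w hw.1).2)
      simpa using hnorm0.const_mul C₂
    · filter_upwards [hmemA] with w hw
      refine ⟨hbij.mapsTo hw.1, ?_⟩
      intro hcon
      rw [Set.mem_singleton_iff] at hcon
      have h1 := (hcomp w hw.1).1
      have hwz : (0:ℝ) < ‖w - z‖ := by
        simp only [norm_pos_iff, sub_ne_zero]
        exact fun e => hw.2 (by simp [e])
      rw [hcon, sub_self, norm_zero] at h1
      nlinarith
  have hth' : Tendsto h' G F := by
    rw [hF, tendsto_nhdsWithin_iff]
    have hb : ∀ᶠ v in G, ‖h' v - z‖ ≤ C₁⁻¹ * ‖v - z'‖ := by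
      filter_upwards [hmemB] with v hv
      obtain ⟨hA', heq⟩ := hinv' v hv.1
      have := (hcomp _ hA').1
      rw [heq] at this
      rw [le_inv_mul_iff₀ hC₁]
      linarith
    constructor
    · rw [tendsto_iff_norm_sub_tendsto_zero]
      apply squeeze_zero' (hmemB.mono fun v _ => norm_nonneg _) hb
      simpa using hnorm0'.const_mul C₁⁻¹
    · filter_upwards [hmemB] with v hv
      obtain ⟨hA', heq⟩ := hinv' v hv.1
      refine ⟨hA', ?_⟩
      intro hcon
      apply hv.2
      simp only [Set.mem_singleton_iff] at hcon ⊢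
      rw [← heq, hcon, hz']
  apply le_antisymm hth
  have : G = Filter.map h (Filter.map h' G) := by
    rw [Filter.map_map]
    symm
    calc Filter.map (h ∘ h') G = Filter.map id G := by
          apply Filter.map_congr
          filter_upwards [hmemB] with v hv
          exact (hinv' v hv.1).2
      _ = G := Filter.map_id
  rw [this]
  exact Filter.map_mono hth'

/-- Metric-comparison core of the chart-independence of the Lelong number.
If `h : A → B` is a bijection between locally closed subsets of `ℂᵏ` and `ℂᵐ` with
`C₁‖w−z‖ ≤ ‖h w − z'‖ ≤ C₂‖w−z‖` on `A` (where `z' = h z` and `z` is a limit point of `A`),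
then for every `φ : A → [-∞,+∞)` the two slopes agree:
`liminf_{w→z} φ w / log‖w−z‖ = liminf_{v→z'} φ (h⁻¹ v) / log‖v−z'‖`. -/
theorem stmt_8 {k m : ℕ}
    (A : Set (EuclideanSpace ℂ (Fin k))) (B : Set (EuclideanSpace ℂ (Fin m)))
    (hA : IsLocallyClosed A) (hB : IsLocallyClosed B)
    (z : EuclideanSpace ℂ (Fin k)) (hzA : z ∈ A) (hacc : AccPt z (Filter.principal A))
    (h : EuclideanSpace ℂ (Fin k) → EuclideanSpace ℂ (Fin m))
    (h' : EuclideanSpace ℂ (Fin m) → EuclideanSpace ℂ (Fin k))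
    (hbij : Set.BijOn h A B) (hinv : Set.InvOn h' h A B)
    (z' : EuclideanSpace ℂ (Fin m)) (hz' : h z = z')
    (C₁ C₂ : ℝ) (hC₁ : 0 < C₁) (hC₂ : 0 < C₂)
    (hcomp : ∀ w ∈ A, C₁ * ‖w - z‖ ≤ ‖h w - z'‖ ∧ ‖h w - z'‖ ≤ C₂ * ‖w - z‖)
    (φ : EuclideanSpace ℂ (Fin k) → EReal) (hφ : ∀ x ∈ A, φ x ≠ ⊤) :
    Filter.liminf (fun w => φ w / ((Real.log ‖w - z‖ : ℝ) : EReal)) (𝓝[A \ {z}] z) =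
      Filter.liminf (fun v => φ (h' v) / ((Real.log ‖v - z'‖ : ℝ) : EReal))
        (𝓝[B \ {z'}] z') := by
  set F := 𝓝[A \ {z}] z with hF
  have hmemA : ∀ᶠ w in F, w ∈ A \ {z} := self_mem_nhdsWithin
  have hmap : Filter.map h F = 𝓝[B \ {z'}] z' :=
    map_punctured_filter_aux A B z h h' z' hbij hinv hz' C₁ C₂ hC₁ hC₂ hcomp
  rw [← hmap, liminf_map_aux]
  -- replace `h' (h w)` by `w`
  have hcongr : Filter.liminf
      ((fun v => φ (h' v) / ((Real.log ‖v - z'‖ : ℝ) : EReal)) ∘ h) F =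
      Filter.liminf (fun w => φ w / ((Real.log ‖h w - z'‖ : ℝ) : EReal)) F := by
    apply Filter.liminf_congr
    filter_upwards [hmemA] with w hw
    simp only [Function.comp_apply, hinv.1 hw.1]
  rw [hcongr]
  -- the two real denominators
  set L : EuclideanSpace ℂ (Fin k) → ℝ := fun w => Real.log ‖w - z‖ with hLdef
  set M : EuclideanSpace ℂ (Fin k) → ℝ := fun w => Real.log ‖h w - z'‖ with hMdef
  have hnormpos : ∀ᶠ w in F, (0:ℝ) < ‖w - z‖ := by
    filter_upwards [hmemA] with w hw
    simp only [norm_pos_iff, sub_ne_zero]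
    exact fun e => hw.2 (by simp [e])
  have hnorm0 : Tendsto (fun w => ‖w - z‖) F (𝓝 0) := by
    have h1 : Tendsto (fun w => ‖w - z‖) (𝓝 z) (𝓝 ‖z - z‖) :=
      (Continuous.norm (continuous_id.sub continuous_const)).tendsto z
    rw [sub_self, norm_zero] at h1
    exact h1.mono_left nhdsWithin_le_nhds
  have hL : Tendsto L F atBot := by
    apply Real.tendsto_log_nhdsGT_zero.comp
    rw [tendsto_nhdsWithin_iff]
    exact ⟨hnorm0, hnormpos⟩
  have hM : Tendsto M F atBot := by
    apply Real.tendsto_log_nhdsGT_zero.comp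
    rw [tendsto_nhdsWithin_iff]
    constructor
    · rw [show (0:ℝ) = 0 from rfl]
      apply squeeze_zero' (hmemA.mono fun w _ => norm_nonneg _)
        (hmemA.mono fun w hw => (hcomp w hw.1).2)
      simpa using hnorm0.const_mul C₂
    · filter_upwards [hmemA, hnormpos] with w hw hwpos
      exact lt_of_lt_of_le (by positivity) (hcomp w hw.1).1
  set D : ℝ := max |Real.log C₁| |Real.log C₂| with hDdef
  have hDev : ∀ᶠ w in F, |M w - L w| ≤ D := by
    filter_upwards [hmemA, hnormpos] with w hw hwpos
    have hlow : Real.log C₁ + L w ≤ M w := by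
      have := Real.log_le_log (by positivity : (0:ℝ) < C₁ * ‖w - z‖) (hcomp w hw.1).1
      rwa [Real.log_mul hC₁.ne' hwpos.ne'] at this
    have hup : M w ≤ Real.log C₂ + L w := by
      have h1 : (0:ℝ) < ‖h w - z'‖ := lt_of_lt_of_le (by positivity) (hcomp w hw.1).1
      have := Real.log_le_log h1 (hcomp w hw.1).2
      rwa [Real.log_mul hC₂.ne' hwpos.ne'] at this
    rw [abs_le]
    constructor
    · have : -D ≤ Real.log C₁ := by
        have := neg_abs_le (Real.log C₁)
        have h2 : -D ≤ -|Real.log C₁| := neg_le_neg (le_max_left _ _)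
        linarith
      linarith
    · have : Real.log C₂ ≤ D := (le_abs_self _).trans (le_max_right _ _)
      linarith
  have hDev' : ∀ᶠ w in F, |L w - M w| ≤ D := hDev.mono fun w hw => by
    rwa [abs_sub_comm]
  exact le_antisymm (slope_liminf_le_aux hL hDev φ) (slope_liminf_le_aux hM hDev' φ)
end
end

section
/- Let X, Y be complex spaces, f : X → Y holomorphic, φ plurisubharmonic on Y, and x ∈ X. Then ν_{φ∘f}(x) ≥ ν_φ(f(x)) · mult_{x,f(x)} f. -/
open Filter Topology Metric Set MeasureTheory
noncomputable section

variable {X : Type*} [TopologicalSpace X]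

/-- A holomorphic map between complex spaces: continuous, and in charts it extends to a
holomorphic map of the ambient complex Euclidean spaces. -/
def HolomorphicMap {X Y : Type*} [TopologicalSpace X] [TopologicalSpace Y]
    (S : ComplexSpace X) (T : ComplexSpace Y) (f : X → Y) : Prop :=
  Continuous f ∧ ∀ x : X, ∃ c ∈ S.atlas, ∃ d ∈ T.atlas, x ∈ c.2.dom ∧ f x ∈ d.2.dom ∧
    ∃ U : Set (Fin c.1 → ℂ), IsOpen U ∧ c.2.toFun x ∈ U ∧
      ∃ F : (Fin c.1 → ℂ) → (Fin d.1 → ℂ), DifferentiableOn ℂ F U ∧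
        ∀ y ∈ c.2.dom, f y ∈ d.2.dom → c.2.toFun y ∈ U →
          F (c.2.toFun y) = d.2.toFun (f y)

/-- The multiplicity `mult_{x, f x} f` of a holomorphic map `f : X → Y` between complex spaces,
computed in charts `c` at `x` and `d` at `f x`:
`liminf_{t→x} log‖d (f t) − d (f x)‖ / log‖c t − c x‖`. -/
def multMap {X Y : Type*} [TopologicalSpace X] [TopologicalSpace Y] {n m : ℕ}
    (c : CSChart X n) (d : CSChart Y m) (f : X → Y) (x : X) : EReal :=
  Filter.liminf
    (fun t => ((Real.log ‖d.toFun (f t) - d.toFun (f x)‖ : ℝ) : EReal) /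
      ((Real.log ‖c.toFun t - c.toFun x‖ : ℝ) : EReal)) (𝓝[c.dom \ {x}] x)

private lemma aux_liminf_nonneg {α : Type*} {F : Filter α} {u : α → EReal} {v : α → ℝ}
    (M : ℝ) (hu : ∀ᶠ t in F, u t ≤ (M : EReal)) (hv : Tendsto v F atBot) :
    0 ≤ Filter.liminf (fun t => u t / ((v t : ℝ) : EReal)) F := by
  set L := Filter.liminf (fun t => u t / ((v t : ℝ) : EReal)) F with hL
  have key : ∀ ε : ℝ, 0 < ε → ((-ε : ℝ) : EReal) ≤ L := by
    intro ε hε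
    refine Filter.le_liminf_of_le (by isBoundedDefault) ?_
    have hC : ∀ᶠ t in F, v t ≤ -((|M| + 1) / ε) := hv.eventually_le_atBot _
    filter_upwards [hu, hC] with t htu htv
    have hvpos : 0 < (|M| + 1) / ε := by positivity
    have hvneg : v t < 0 := lt_of_le_of_lt htv (by linarith)
    rcases eq_or_ne (u t) ⊥ with hb | hb
    · rw [hb, EReal.bot_div_of_neg_ne_bot (by exact_mod_cast hvneg) (EReal.coe_ne_bot _)]
      exact le_top
    · have hnt : u t ≠ ⊤ := fun h => by simp [h] at htu
      lift u t to ℝ using ⟨hnt, hb⟩ with a ha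
      rw [← EReal.coe_div, EReal.coe_le_coe_iff]
      have haM : a ≤ M := by exact_mod_cast htu
      rw [le_div_iff_of_neg hvneg]
      have h1 : ε * (-(v t)) ≥ ε * ((|M| + 1) / ε) := by
        apply mul_le_mul_of_nonneg_left _ hε.le
        linarith
      rw [mul_div_cancel₀ _ (ne_of_gt hε)] at h1
      have : a ≤ |M| + 1 := le_trans haM (by linarith [le_abs_self M])
      nlinarith
  rcases le_or_gt 0 L with h | h
  · exact h
  · exfalso
    obtain ⟨q, hq1, hq2⟩ := EReal.exists_between_coe_real h
    have hqneg : q < 0 := by exact_mod_cast hq2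
    have := key (-q) (by linarith)
    rw [neg_neg] at this
    exact absurd (lt_of_le_of_lt this hq1) (lt_irrefl _)

private lemma aux_exists_ab {L1 L2 : EReal} (h1 : 0 < L1) (h2 : 0 < L2) {p : EReal}
    (hp : p < L1 * L2) :
    ∃ a b : ℝ, 0 < a ∧ (a : EReal) < L1 ∧ 0 < b ∧ (b : EReal) < L2 ∧ p ≤ ((a * b : ℝ) : EReal) := by
  obtain ⟨q, hpq, hq⟩ := EReal.exists_between_coe_real hp
  obtain ⟨b₁, hb₁0, hb₁⟩ : ∃ b : ℝ, 0 < b ∧ (b : EReal) < L1 := by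
    obtain ⟨b, hb0, hb⟩ := EReal.exists_between_coe_real h1
    exact ⟨b, by exact_mod_cast hb0, hb⟩
  obtain ⟨b₂, hb₂0, hb₂⟩ : ∃ b : ℝ, 0 < b ∧ (b : EReal) < L2 := by
    obtain ⟨b, hb0, hb⟩ := EReal.exists_between_coe_real h2
    exact ⟨b, by exact_mod_cast hb0, hb⟩
  rcases eq_or_ne L1 ⊤ with hT1 | hT1
  · refine ⟨max (q / b₂) 0 + 1, b₂, by positivity, ?_, hb₂0, hb₂, ?_⟩
    · rw [hT1]; exact EReal.coe_lt_top _
    · have : q / b₂ ≤ max (q / b₂) 0 := le_max_left _ _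
      have hq' : q ≤ (max (q / b₂) 0 + 1) * b₂ := by
        rw [← div_le_iff₀ hb₂0]
        linarith
      exact le_trans hpq.le (by exact_mod_cast hq')
  rcases eq_or_ne L2 ⊤ with hT2 | hT2
  · refine ⟨b₁, max (q / b₁) 0 + 1, hb₁0, hb₁, by positivity, ?_, ?_⟩
    · rw [hT2]; exact EReal.coe_lt_top _
    · have : q / b₁ ≤ max (q / b₁) 0 := le_max_left _ _
      have hq' : q ≤ b₁ * (max (q / b₁) 0 + 1) := by
        rw [mul_comm, ← div_le_iff₀ hb₁0]
        linarith
      exact le_trans hpq.le (by exact_mod_cast hq')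
  -- both finite
  have hB1 : L1 ≠ ⊥ := ne_bot_of_gt h1
  have hB2 : L2 ≠ ⊥ := ne_bot_of_gt h2
  set r := L1.toReal with hr
  set s := L2.toReal with hs
  have hL1r : L1 = (r : EReal) := (EReal.coe_toReal hT1 hB1).symm
  have hL2s : L2 = (s : EReal) := (EReal.coe_toReal hT2 hB2).symm
  have hr0 : 0 < r := by rw [hL1r] at h1; exact_mod_cast h1
  have hs0 : 0 < s := by rw [hL2s] at h2; exact_mod_cast h2
  have hqrs : q < r * s := by
    rw [hL1r, hL2s, ← EReal.coe_mul] at hq; exact_mod_cast hq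
  rcases le_or_gt q 0 with hq0 | hq0
  · refine ⟨r / 2, s / 2, by positivity, ?_, by positivity, ?_, ?_⟩
    · rw [hL1r]; exact_mod_cast by linarith
    · rw [hL2s]; exact_mod_cast by linarith
    · refine le_trans hpq.le ?_
      have : (0:ℝ) < r / 2 * (s / 2) := by positivity
      exact_mod_cast by linarith
  · set θ := q / (r * s) with hθ
    have hθ0 : 0 < θ := by positivity
    have hθ1 : θ < 1 := (div_lt_one (by positivity)).2 hqrs
    set σ := Real.sqrt θ with hσ
    have hσ0 : 0 < σ := Real.sqrt_pos.2 hθ0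
    have hσ1 : σ < 1 := by
      rw [hσ, show (1:ℝ) = Real.sqrt 1 by simp]
      exact Real.sqrt_lt_sqrt hθ0.le hθ1
    refine ⟨r * σ, s * σ, by positivity, ?_, by positivity, ?_, ?_⟩
    · rw [hL1r]; exact_mod_cast by nlinarith
    · rw [hL2s]; exact_mod_cast by nlinarith
    · refine le_trans hpq.le ?_
      have hσσ : σ * σ = θ := Real.mul_self_sqrt hθ0.le
      have : r * σ * (s * σ) = q := by
        rw [show r * σ * (s * σ) = (r * s) * (σ * σ) by ring, hσσ, hθ,
          mul_div_cancel₀ _ (by positivity : (r*s) ≠ 0)]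
      rw [this]

/-- For a holomorphic map `f : X → Y` of complex spaces and `φ`
plurisubharmonic on `Y`, one has `ν_{φ∘f}(x) ≥ ν_φ(f x) · mult_{x, f x} f`. -/
theorem stmt_10 {X Y : Type*} [TopologicalSpace X] [TopologicalSpace Y]
    (S : ComplexSpace X) (T : ComplexSpace Y) (f : X → Y) (hf : HolomorphicMap S T f)
    (φ : Y → EReal) (hφ : PSHSpace T φ) (x : X)
    (c : Σ n : ℕ, CSChart X n) (hc : c ∈ S.atlas) (hx : x ∈ c.2.dom)
    (d : Σ m : ℕ, CSChart Y m) (hd : d ∈ T.atlas) (hfx : f x ∈ d.2.dom) :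
    lelongChart c.2 (fun t => φ (f t)) x ≥ lelongChart d.2 φ (f x) * multMap c.2 d.2 f x := by
  classical
  have hfc : Continuous f := hf.1
  have hφtop : ∀ y, φ y ≠ ⊤ := hφ.1
  have hφusc : UpperSemicontinuous φ := hφ.2.1
  set Fl := 𝓝[c.2.dom \ {x}] x with hFl
  set G := 𝓝[d.2.dom \ {f x}] (f x) with hG
  set logc : X → ℝ := fun t => Real.log ‖c.2.toFun t - c.2.toFun x‖ with hlogc
  set logd : Y → ℝ := fun w => Real.log ‖d.2.toFun w - d.2.toFun (f x)‖ with hlogd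
  -- basic continuity facts
  have hcc : ContinuousAt c.2.toFun x :=
    c.2.continuousOn_toFun.continuousAt (c.2.dom_open.mem_nhds hx)
  have hcd : ContinuousAt d.2.toFun (f x) :=
    d.2.continuousOn_toFun.continuousAt (d.2.dom_open.mem_nhds hfx)
  -- norm of c t - c x tends to 0 and is eventually positive along Fl
  have hns_c : Tendsto (fun t => ‖c.2.toFun t - c.2.toFun x‖) (𝓝 x) (𝓝 0) := by
    have : ContinuousAt (fun t => ‖c.2.toFun t - c.2.toFun x‖) x :=
      (hcc.sub continuousAt_const).norm
    simpa using this.tendsto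
  have hpos_c : ∀ᶠ t in Fl, 0 < ‖c.2.toFun t - c.2.toFun x‖ := by
    filter_upwards [eventually_mem_nhdsWithin] with t ht
    have hne : c.2.toFun t ≠ c.2.toFun x := by
      intro hEq
      exact ht.2 (by rw [← c.2.left_inv t ht.1, hEq, c.2.left_inv x hx]; rfl)
    simpa [norm_pos_iff, sub_ne_zero] using hne
  have htends_c : Tendsto logc Fl atBot := by
    refine Real.tendsto_log_nhdsGT_zero.comp ?_
    exact tendsto_nhdsWithin_of_tendsto_nhds_of_eventually_within _
      (hns_c.mono_left nhdsWithin_le_nhds) hpos_c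
  -- same along G
  have hns_d : Tendsto (fun w => ‖d.2.toFun w - d.2.toFun (f x)‖) (𝓝 (f x)) (𝓝 0) := by
    have : ContinuousAt (fun w => ‖d.2.toFun w - d.2.toFun (f x)‖) (f x) :=
      (hcd.sub continuousAt_const).norm
    simpa using this.tendsto
  have hpos_d : ∀ᶠ w in G, 0 < ‖d.2.toFun w - d.2.toFun (f x)‖ := by
    filter_upwards [eventually_mem_nhdsWithin] with w hw
    have hne : d.2.toFun w ≠ d.2.toFun (f x) := by
      intro hEq
      exact hw.2 (by rw [← d.2.left_inv w hw.1, hEq, d.2.left_inv (f x) hfx]; rfl)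
    simpa [norm_pos_iff, sub_ne_zero] using hne
  have htends_d : Tendsto logd G atBot := by
    refine Real.tendsto_log_nhdsGT_zero.comp ?_
    exact tendsto_nhdsWithin_of_tendsto_nhds_of_eventually_within _
      (hns_d.mono_left nhdsWithin_le_nhds) hpos_d
  -- upper bound for φ near f x
  obtain ⟨M, hM, -⟩ := EReal.exists_between_coe_real (lt_top_iff_ne_top.2 (hφtop (f x)))
  have hUSC : ∀ᶠ w in 𝓝 (f x), φ w < (M : EReal) := hφusc (f x) M hM
  -- nonnegativity of the three liminfs
  set L1 := lelongChart d.2 φ (f x) with hL1def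
  set L2 := multMap c.2 d.2 f x with hL2def
  have hL1 : 0 ≤ L1 := by
    refine aux_liminf_nonneg M ?_ htends_d
    exact (hUSC.filter_mono nhdsWithin_le_nhds).mono fun w hw => hw.le
  -- norm of d (f t) - d (f x) tends to zero along Fl, hence eventually < 1
  have hns_df : Tendsto (fun t => ‖d.2.toFun (f t) - d.2.toFun (f x)‖) (𝓝 x) (𝓝 0) := by
    have : ContinuousAt (fun t => ‖d.2.toFun (f t) - d.2.toFun (f x)‖) x :=
      (((hcd.comp hfc.continuousAt).sub continuousAt_const)).norm
    simpa using this.tendsto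
  have hsmall_d : ∀ᶠ t in Fl, ‖d.2.toFun (f t) - d.2.toFun (f x)‖ < 1 :=
    ((hns_df.eventually (gt_mem_nhds (by norm_num : (0:ℝ) < 1)))).filter_mono
      nhdsWithin_le_nhds
  have hsmall_c : ∀ᶠ t in Fl, ‖c.2.toFun t - c.2.toFun x‖ < 1 :=
    ((hns_c.eventually (gt_mem_nhds (by norm_num : (0:ℝ) < 1)))).filter_mono
      nhdsWithin_le_nhds
  have hL2 : 0 ≤ L2 := by
    refine aux_liminf_nonneg (u := fun t => ((logd (f t) : ℝ) : EReal)) 0 ?_ htends_c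
    filter_upwards [hsmall_d] with t ht
    exact_mod_cast Real.log_nonpos (norm_nonneg _) ht.le
  have hLHS : 0 ≤ lelongChart c.2 (fun t => φ (f t)) x := by
    refine aux_liminf_nonneg (u := fun t => φ (f t)) M ?_ htends_c
    have := (hfc.continuousAt.eventually hUSC).filter_mono
      (nhdsWithin_le_nhds : Fl ≤ 𝓝 x)
    exact this.mono fun t ht => ht.le
  -- degenerate cases
  rcases hL1.eq_or_lt with h1 | h1
  · rw [← h1, zero_mul]; exact hLHS
  rcases hL2.eq_or_lt with h2 | h2
  · rw [← h2, mul_zero]; exact hLHS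
  -- main case
  refine le_of_forall_lt_imp_le_of_dense fun p hp => ?_
  obtain ⟨a, b, ha0, haL, hb0, hbL, hpab⟩ := aux_exists_ab h1 h2 hp
  refine le_trans hpab ?_
  -- eventually facts
  have Ea : ∀ᶠ w in G, (a : EReal) < φ w / ((logd w : ℝ) : EReal) :=
    Filter.eventually_lt_of_lt_liminf haL
  rw [hG, eventually_nhdsWithin_iff] at Ea
  have Ea' : ∀ᶠ t in Fl, f t ∈ d.2.dom \ {f x} →
      (a : EReal) < φ (f t) / ((logd (f t) : ℝ) : EReal) :=
    (hfc.continuousAt.eventually Ea).filter_mono nhdsWithin_le_nhds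
  have Eb : ∀ᶠ t in Fl, (b : EReal) <
      ((logd (f t) : ℝ) : EReal) / ((logc t : ℝ) : EReal) :=
    Filter.eventually_lt_of_lt_liminf hbL
  have Edom : ∀ᶠ t in Fl, f t ∈ d.2.dom :=
    (hfc.continuousAt.eventually (d.2.dom_open.eventually_mem hfx)).filter_mono
      nhdsWithin_le_nhds
  refine Filter.le_liminf_of_le (by isBoundedDefault) ?_
  filter_upwards [Ea', Eb, Edom, hsmall_d, hsmall_c, hpos_c] with t ha' hb' hdom hds hcs hcp
  have hrneg : logc t < 0 := Real.log_neg hcp hcs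
  have hpl_ne : logd (f t) ≠ 0 := by
    intro h0
    rw [h0] at hb'
    simp only [EReal.coe_zero, EReal.zero_div] at hb'
    exact absurd hb' (not_lt.2 (by exact_mod_cast hb0.le))
  have hplneg : logd (f t) < 0 :=
    lt_of_le_of_ne (Real.log_nonpos (norm_nonneg _) hds.le) hpl_ne
  have hne : f t ≠ f x := by
    intro hEq
    apply hpl_ne
    simp [hlogd, hEq]
  have ha := ha' ⟨hdom, hne⟩
  have hfact : φ (f t) / ((logc t : ℝ) : EReal)
      = (φ (f t) / ((logd (f t) : ℝ) : EReal)) *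
        (((logd (f t) : ℝ) : EReal) / ((logc t : ℝ) : EReal)) := by
    rw [EReal.mul_div, EReal.div_mul_cancel (EReal.coe_ne_bot _) (EReal.coe_ne_top _)
      (by exact_mod_cast hpl_ne)]
  show ((a * b : ℝ) : EReal) ≤ φ (f t) / ((logc t : ℝ) : EReal)
  rw [hfact, EReal.coe_mul]
  calc (a : EReal) * (b : EReal)
      ≤ (φ (f t) / ((logd (f t) : ℝ) : EReal)) * (b : EReal) :=
        mul_le_mul_of_nonneg_right ha.le (by exact_mod_cast hb0.le)
    _ ≤ (φ (f t) / ((logd (f t) : ℝ) : EReal)) *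
        (((logd (f t) : ℝ) : EReal) / ((logc t : ℝ) : EReal)) :=
        mul_le_mul_of_nonneg_left hb'.le
          (le_trans (by exact_mod_cast ha0.le) ha.le)
end
end
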